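/- arXiv:1506.04457 — 4 statements merged into one kernel-verified Lean document; each statement's English description precedes it below -/
import Mathlib

section
/- The reflections s_0, …, s_8 satisfy the fundamental relations of the affine Weyl group W(E_8^{(1)}): s_i ∘ s_i = id for i = 0,…,8; (s_i ∘ s_{i+1})^3 = id for i = 1,…,7; (s_3 ∘ s_0)^3 = id; and (s_i ∘ s_j)^2 = id for every other pair i ≠ j (i.e. whenever {i,j} is not one of {1,2},{2,3},{3,4},{4,5},{5,6},{6,7},{7,8},{0,3}). -/
open Finset Function

/-- The Picard lattice `ℤ^10` with basis `H_f, H_g, e_1, …, e_8`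
(coordinates `0, 1, 2, …, 9`). -/
abbrev Pic : Type := Fin 10 → ℤ

/-- The intersection form: `(H_f|H_g) = 1`, `(H_f|H_f) = (H_g|H_g) = 0`,
`(H_f|e_i) = (H_g|e_i) = 0`, `(e_i|e_j) = -δ_{ij}`. -/
def form (v w : Pic) : ℤ :=
  v 0 * w 1 + v 1 * w 0
    - v 2 * w 2 - v 3 * w 3 - v 4 * w 4 - v 5 * w 5
    - v 6 * w 6 - v 7 * w 7 - v 8 * w 8 - v 9 * w 9

/-- The anticanonical class `δ = 2H_f + 2H_g - (e_1 + ⋯ + e_8)`. -/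
def delta : Pic := ![2, 2, -1, -1, -1, -1, -1, -1, -1, -1]

/-- The simple roots `α_0, …, α_8`:
`α_0 = e_1 - e_2`, `α_1 = H_f - H_g`, `α_2 = H_g - e_1 - e_2`,
`α_3 = e_2 - e_3`, `α_4 = e_3 - e_4`, `α_5 = e_4 - e_5`,
`α_6 = e_5 - e_6`, `α_7 = e_6 - e_7`, `α_8 = e_7 - e_8`. -/
def α : Fin 9 → Pic :=
  ![![0, 0, 1, -1, 0, 0, 0, 0, 0, 0],
    ![1, -1, 0, 0, 0, 0, 0, 0, 0, 0],
    ![0, 1, -1, -1, 0, 0, 0, 0, 0, 0],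
    ![0, 0, 0, 1, -1, 0, 0, 0, 0, 0],
    ![0, 0, 0, 0, 1, -1, 0, 0, 0, 0],
    ![0, 0, 0, 0, 0, 1, -1, 0, 0, 0],
    ![0, 0, 0, 0, 0, 0, 1, -1, 0, 0],
    ![0, 0, 0, 0, 0, 0, 0, 1, -1, 0],
    ![0, 0, 0, 0, 0, 0, 0, 0, 1, -1]]

/-- The reflection `s_i(v) = v + (v|α_i)·α_i`. -/
def s (i : Fin 9) : Pic → Pic := fun v => v + form v (α i) • α i

/-- The unordered pairs of indices joined by an edge in the `E_8^{(1)}` Dynkin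
diagram: `{1,2},{2,3},{3,4},{4,5},{5,6},{6,7},{7,8},{0,3}`. -/
def E8pairs : Finset (Finset (Fin 9)) :=
  {{1, 2}, {2, 3}, {3, 4}, {4, 5}, {5, 6}, {6, 7}, {7, 8}, {0, 3}}

lemma s_def (i : Fin 9) (v : Pic) : s i v = v + form v (α i) • α i := rfl

lemma form_add_smul (v w u : Pic) (c : ℤ) :
    form (v + c • w) u = form v u + c * form w u := by
  simp only [form, Pi.add_apply, Pi.smul_apply, smul_eq_mul]; ring

lemma form_self : ∀ i : Fin 9, form (α i) (α i) = -2 := by decide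

lemma key1 (i : Fin 9) : s i ∘ s i = id := by
  funext v k
  show s i (s i v) k = v k
  simp only [s_def, form_add_smul, form_self, Pi.add_apply, Pi.smul_apply, smul_eq_mul]
  ring

lemma key2 (i j : Fin 9) (hij : form (α i) (α j) = 0) (hji : form (α j) (α i) = 0) :
    (s i ∘ s j)^[2] = id := by
  funext v k
  show s i (s j (s i (s j v))) k = v k
  simp only [s_def, form_add_smul, form_self, hij, hji, Pi.add_apply, Pi.smul_apply,
    smul_eq_mul]
  ring

lemma key3 (i j : Fin 9) (hij : form (α i) (α j) = 1) (hji : form (α j) (α i) = 1) :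
    (s i ∘ s j)^[3] = id := by
  funext v k
  show s i (s j (s i (s j (s i (s j v))))) k = v k
  simp only [s_def, form_add_smul, form_self, hij, hji, Pi.add_apply, Pi.smul_apply,
    smul_eq_mul]
  ring

lemma cartan : ∀ i j : Fin 9, i ≠ j →
    (form (α i) (α j) = 0 ∧ form (α j) (α i) = 0 ∧ ({i, j} : Finset (Fin 9)) ∉ E8pairs) ∨
    (form (α i) (α j) = 1 ∧ form (α j) (α i) = 1 ∧ ({i, j} : Finset (Fin 9)) ∈ E8pairs) := by
  decide

/-- The reflections `s_0, …, s_8` satisfy the fundamental relations of the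
affine Weyl group `W(E_8^{(1)})`: `s_i² = 1`; `(s_i s_j)³ = 1` when `{i,j}` is
an edge of the `E_8^{(1)}` diagram, and `(s_i s_j)² = 1` for all other pairs
`i ≠ j`. -/
theorem statement_2 :
    (∀ i : Fin 9, s i ∘ s i = id) ∧
    (∀ i j : Fin 9, i ≠ j →
      (s i ∘ s j)^[if ({i, j} : Finset (Fin 9)) ∈ E8pairs then 3 else 2] = id) := by
  refine ⟨key1, fun i j hij => ?_⟩
  rcases cartan i j hij with ⟨h1, h2, h3⟩ | ⟨h1, h2, h3⟩
  · rw [if_neg h3]; exact key2 i j h1 h2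
  · rw [if_pos h3]; exact key3 i j h1 h2
end

section
/- The linear map φ_a is a Cremona isometry at the lattice level: it preserves the intersection form, (φ_a(v)|φ_a(v')) = (v|v') for all v, v' ∈ Pic, and it fixes the anticanonical class, φ_a(δ) = δ. -/
open Finset Function

/-- Images of the basis vectors `H_f, H_g, e_1, …, e_8` under `φ_a`. -/
def phiaImg : Fin 10 → Pic :=
  ![![5, 2, -1, -1, -1, -1, -2, -2, -2, -2],
    ![2, 1, 0, 0, 0, 0, -1, -1, -1, -1],
    ![2, 1, -1, 0, 0, 0, -1, -1, -1, -1],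
    ![2, 1, 0, -1, 0, 0, -1, -1, -1, -1],
    ![2, 1, 0, 0, -1, 0, -1, -1, -1, -1],
    ![2, 1, 0, 0, 0, -1, -1, -1, -1, -1],
    ![1, 0, 0, 0, 0, 0, -1, 0, 0, 0],
    ![1, 0, 0, 0, 0, 0, 0, -1, 0, 0],
    ![1, 0, 0, 0, 0, 0, 0, 0, -1, 0],
    ![1, 0, 0, 0, 0, 0, 0, 0, 0, -1]]

/-- The ℤ-linear map `φ_a : Pic → Pic`. -/
def phia (v : Pic) : Pic := ∑ i : Fin 10, v i • phiaImg i

lemma sum10 (f : Fin 10 → ℤ) :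
    ∑ i : Fin 10, f i = f 0 + f 1 + f 2 + f 3 + f 4 + f 5 + f 6 + f 7 + f 8 + f 9 := by
  rw [show (univ : Finset (Fin 10)) = {0,1,2,3,4,5,6,7,8,9} from rfl]
  simp [Finset.sum_insert, Finset.mem_insert]
  ring

lemma phia_apply (v : Pic) (j : Fin 10) :
    phia v j = ∑ i : Fin 10, v i * phiaImg i j := by
  simp [phia, Finset.sum_apply]

lemma pE0_0 : phiaImg 0 0 = (5) := rfl
lemma pE0_1 : phiaImg 0 1 = (2) := rfl
lemma pE0_2 : phiaImg 0 2 = (-1) := rfl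
lemma pE0_3 : phiaImg 0 3 = (-1) := rfl
lemma pE0_4 : phiaImg 0 4 = (-1) := rfl
lemma pE0_5 : phiaImg 0 5 = (-1) := rfl
lemma pE0_6 : phiaImg 0 6 = (-2) := rfl
lemma pE0_7 : phiaImg 0 7 = (-2) := rfl
lemma pE0_8 : phiaImg 0 8 = (-2) := rfl
lemma pE0_9 : phiaImg 0 9 = (-2) := rfl
lemma pE1_0 : phiaImg 1 0 = (2) := rfl
lemma pE1_1 : phiaImg 1 1 = (1) := rfl
lemma pE1_2 : phiaImg 1 2 = (0) := rfl
lemma pE1_3 : phiaImg 1 3 = (0) := rfl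
lemma pE1_4 : phiaImg 1 4 = (0) := rfl
lemma pE1_5 : phiaImg 1 5 = (0) := rfl
lemma pE1_6 : phiaImg 1 6 = (-1) := rfl
lemma pE1_7 : phiaImg 1 7 = (-1) := rfl
lemma pE1_8 : phiaImg 1 8 = (-1) := rfl
lemma pE1_9 : phiaImg 1 9 = (-1) := rfl
lemma pE2_0 : phiaImg 2 0 = (2) := rfl
lemma pE2_1 : phiaImg 2 1 = (1) := rfl
lemma pE2_2 : phiaImg 2 2 = (-1) := rfl
lemma pE2_3 : phiaImg 2 3 = (0) := rfl
lemma pE2_4 : phiaImg 2 4 = (0) := rfl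
lemma pE2_5 : phiaImg 2 5 = (0) := rfl
lemma pE2_6 : phiaImg 2 6 = (-1) := rfl
lemma pE2_7 : phiaImg 2 7 = (-1) := rfl
lemma pE2_8 : phiaImg 2 8 = (-1) := rfl
lemma pE2_9 : phiaImg 2 9 = (-1) := rfl
lemma pE3_0 : phiaImg 3 0 = (2) := rfl
lemma pE3_1 : phiaImg 3 1 = (1) := rfl
lemma pE3_2 : phiaImg 3 2 = (0) := rfl
lemma pE3_3 : phiaImg 3 3 = (-1) := rfl
lemma pE3_4 : phiaImg 3 4 = (0) := rfl
lemma pE3_5 : phiaImg 3 5 = (0) := rfl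
lemma pE3_6 : phiaImg 3 6 = (-1) := rfl
lemma pE3_7 : phiaImg 3 7 = (-1) := rfl
lemma pE3_8 : phiaImg 3 8 = (-1) := rfl
lemma pE3_9 : phiaImg 3 9 = (-1) := rfl
lemma pE4_0 : phiaImg 4 0 = (2) := rfl
lemma pE4_1 : phiaImg 4 1 = (1) := rfl
lemma pE4_2 : phiaImg 4 2 = (0) := rfl
lemma pE4_3 : phiaImg 4 3 = (0) := rfl
lemma pE4_4 : phiaImg 4 4 = (-1) := rfl
lemma pE4_5 : phiaImg 4 5 = (0) := rfl
lemma pE4_6 : phiaImg 4 6 = (-1) := rfl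
lemma pE4_7 : phiaImg 4 7 = (-1) := rfl
lemma pE4_8 : phiaImg 4 8 = (-1) := rfl
lemma pE4_9 : phiaImg 4 9 = (-1) := rfl
lemma pE5_0 : phiaImg 5 0 = (2) := rfl
lemma pE5_1 : phiaImg 5 1 = (1) := rfl
lemma pE5_2 : phiaImg 5 2 = (0) := rfl
lemma pE5_3 : phiaImg 5 3 = (0) := rfl
lemma pE5_4 : phiaImg 5 4 = (0) := rfl
lemma pE5_5 : phiaImg 5 5 = (-1) := rfl
lemma pE5_6 : phiaImg 5 6 = (-1) := rfl
lemma pE5_7 : phiaImg 5 7 = (-1) := rfl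
lemma pE5_8 : phiaImg 5 8 = (-1) := rfl
lemma pE5_9 : phiaImg 5 9 = (-1) := rfl
lemma pE6_0 : phiaImg 6 0 = (1) := rfl
lemma pE6_1 : phiaImg 6 1 = (0) := rfl
lemma pE6_2 : phiaImg 6 2 = (0) := rfl
lemma pE6_3 : phiaImg 6 3 = (0) := rfl
lemma pE6_4 : phiaImg 6 4 = (0) := rfl
lemma pE6_5 : phiaImg 6 5 = (0) := rfl
lemma pE6_6 : phiaImg 6 6 = (-1) := rfl
lemma pE6_7 : phiaImg 6 7 = (0) := rfl
lemma pE6_8 : phiaImg 6 8 = (0) := rfl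
lemma pE6_9 : phiaImg 6 9 = (0) := rfl
lemma pE7_0 : phiaImg 7 0 = (1) := rfl
lemma pE7_1 : phiaImg 7 1 = (0) := rfl
lemma pE7_2 : phiaImg 7 2 = (0) := rfl
lemma pE7_3 : phiaImg 7 3 = (0) := rfl
lemma pE7_4 : phiaImg 7 4 = (0) := rfl
lemma pE7_5 : phiaImg 7 5 = (0) := rfl
lemma pE7_6 : phiaImg 7 6 = (0) := rfl
lemma pE7_7 : phiaImg 7 7 = (-1) := rfl
lemma pE7_8 : phiaImg 7 8 = (0) := rfl
lemma pE7_9 : phiaImg 7 9 = (0) := rfl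
lemma pE8_0 : phiaImg 8 0 = (1) := rfl
lemma pE8_1 : phiaImg 8 1 = (0) := rfl
lemma pE8_2 : phiaImg 8 2 = (0) := rfl
lemma pE8_3 : phiaImg 8 3 = (0) := rfl
lemma pE8_4 : phiaImg 8 4 = (0) := rfl
lemma pE8_5 : phiaImg 8 5 = (0) := rfl
lemma pE8_6 : phiaImg 8 6 = (0) := rfl
lemma pE8_7 : phiaImg 8 7 = (0) := rfl
lemma pE8_8 : phiaImg 8 8 = (-1) := rfl
lemma pE8_9 : phiaImg 8 9 = (0) := rfl
lemma pE9_0 : phiaImg 9 0 = (1) := rfl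
lemma pE9_1 : phiaImg 9 1 = (0) := rfl
lemma pE9_2 : phiaImg 9 2 = (0) := rfl
lemma pE9_3 : phiaImg 9 3 = (0) := rfl
lemma pE9_4 : phiaImg 9 4 = (0) := rfl
lemma pE9_5 : phiaImg 9 5 = (0) := rfl
lemma pE9_6 : phiaImg 9 6 = (0) := rfl
lemma pE9_7 : phiaImg 9 7 = (0) := rfl
lemma pE9_8 : phiaImg 9 8 = (0) := rfl
lemma pE9_9 : phiaImg 9 9 = (-1) := rfl

lemma phia_c0 (v : Pic) : phia v 0 = (5) * v 0 + (2) * v 1 + (2) * v 2 + (2) * v 3 + (2) * v 4 + (2) * v 5 + (1) * v 6 + (1) * v 7 + (1) * v 8 + (1) * v 9 := by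
  rw [phia_apply, sum10]; simp only [pE0_0, pE0_1, pE0_2, pE0_3, pE0_4, pE0_5, pE0_6, pE0_7, pE0_8, pE0_9, pE1_0, pE1_1, pE1_2, pE1_3, pE1_4, pE1_5, pE1_6, pE1_7, pE1_8, pE1_9, pE2_0, pE2_1, pE2_2, pE2_3, pE2_4, pE2_5, pE2_6, pE2_7, pE2_8, pE2_9, pE3_0, pE3_1, pE3_2, pE3_3, pE3_4, pE3_5, pE3_6, pE3_7, pE3_8, pE3_9, pE4_0, pE4_1, pE4_2, pE4_3, pE4_4, pE4_5, pE4_6, pE4_7, pE4_8, pE4_9, pE5_0, pE5_1, pE5_2, pE5_3, pE5_4, pE5_5, pE5_6, pE5_7, pE5_8, pE5_9, pE6_0, pE6_1, pE6_2, pE6_3, pE6_4, pE6_5, pE6_6, pE6_7, pE6_8, pE6_9, pE7_0, pE7_1, pE7_2, pE7_3, pE7_4, pE7_5, pE7_6, pE7_7, pE7_8, pE7_9, pE8_0, pE8_1, pE8_2, pE8_3, pE8_4, pE8_5, pE8_6, pE8_7, pE8_8, pE8_9, pE9_0, pE9_1, pE9_2, pE9_3, pE9_4, pE9_5, pE9_6,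 pE9_7, pE9_8, pE9_9]; ring

lemma phia_c1 (v : Pic) : phia v 1 = (2) * v 0 + (1) * v 1 + (1) * v 2 + (1) * v 3 + (1) * v 4 + (1) * v 5 + (0) * v 6 + (0) * v 7 + (0) * v 8 + (0) * v 9 := by
  rw [phia_apply, sum10]; simp only [pE0_0, pE0_1, pE0_2, pE0_3, pE0_4, pE0_5, pE0_6, pE0_7, pE0_8, pE0_9, pE1_0, pE1_1, pE1_2, pE1_3, pE1_4, pE1_5, pE1_6, pE1_7, pE1_8, pE1_9, pE2_0, pE2_1, pE2_2, pE2_3, pE2_4, pE2_5, pE2_6, pE2_7, pE2_8, pE2_9, pE3_0, pE3_1, pE3_2, pE3_3, pE3_4, pE3_5, pE3_6, pE3_7, pE3_8, pE3_9, pE4_0, pE4_1, pE4_2, pE4_3, pE4_4, pE4_5, pE4_6, pE4_7, pE4_8, pE4_9, pE5_0, pE5_1, pE5_2, pE5_3, pE5_4, pE5_5, pE5_6, pE5_7, pE5_8, pE5_9, pE6_0, pE6_1, pE6_2, pE6_3, pE6_4, pE6_5, pE6_6, pE6_7, pE6_8, pE6_9, pE7_0, pE7_1, pE7_2, pE7_3,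 pE7_4, pE7_5, pE7_6, pE7_7, pE7_8, pE7_9, pE8_0, pE8_1, pE8_2, pE8_3, pE8_4, pE8_5, pE8_6, pE8_7, pE8_8, pE8_9, pE9_0, pE9_1, pE9_2, pE9_3, pE9_4, pE9_5, pE9_6, pE9_7, pE9_8, pE9_9]; ring

lemma phia_c2 (v : Pic) : phia v 2 = (-1) * v 0 + (0) * v 1 + (-1) * v 2 + (0) * v 3 + (0) * v 4 + (0) * v 5 + (0) * v 6 + (0) * v 7 + (0) * v 8 + (0) * v 9 := by
  rw [phia_apply, sum10]; simp only [pE0_0, pE0_1, pE0_2, pE0_3, pE0_4, pE0_5, pE0_6, pE0_7, pE0_8, pE0_9, pE1_0, pE1_1, pE1_2, pE1_3, pE1_4, pE1_5, pE1_6, pE1_7, pE1_8, pE1_9, pE2_0, pE2_1, pE2_2, pE2_3, pE2_4, pE2_5, pE2_6, pE2_7, pE2_8, pE2_9, pE3_0, pE3_1, pE3_2, pE3_3, pE3_4, pE3_5, pE3_6, pE3_7, pE3_8, pE3_9, pE4_0, pE4_1, pE4_2, pE4_3, pE4_4, pE4_5, pE4_6, pE4_7, pE4_8, pE4_9, pE5_0,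 pE5_1, pE5_2, pE5_3, pE5_4, pE5_5, pE5_6, pE5_7, pE5_8, pE5_9, pE6_0, pE6_1, pE6_2, pE6_3, pE6_4, pE6_5, pE6_6, pE6_7, pE6_8, pE6_9, pE7_0, pE7_1, pE7_2, pE7_3, pE7_4, pE7_5, pE7_6, pE7_7, pE7_8, pE7_9, pE8_0, pE8_1, pE8_2, pE8_3, pE8_4, pE8_5, pE8_6, pE8_7, pE8_8, pE8_9, pE9_0, pE9_1, pE9_2, pE9_3, pE9_4, pE9_5, pE9_6, pE9_7, pE9_8, pE9_9]; ring

lemma phia_c3 (v : Pic) : phia v 3 = (-1) * v 0 + (0) * v 1 + (0) * v 2 + (-1) * v 3 + (0) * v 4 + (0) * v 5 + (0) * v 6 + (0) * v 7 + (0) * v 8 + (0) * v 9 := by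
  rw [phia_apply, sum10]; simp only [pE0_0, pE0_1, pE0_2, pE0_3, pE0_4, pE0_5, pE0_6, pE0_7, pE0_8, pE0_9, pE1_0, pE1_1, pE1_2, pE1_3, pE1_4, pE1_5, pE1_6, pE1_7, pE1_8, pE1_9, pE2_0, pE2_1, pE2_2, pE2_3, pE2_4, pE2_5, pE2_6, pE2_7, pE2_8, pE2_9, pE3_0, pE3_1, pE3_2, pE3_3, pE3_4, pE3_5, pE3_6, pE3_7, pE3_8, pE3_9, pE4_0, pE4_1, pE4_2, pE4_3, pE4_4, pE4_5, pE4_6, pE4_7, pE4_8, pE4_9, pE5_0, pE5_1, pE5_2, pE5_3, pE5_4, pE5_5, pE5_6, pE5_7, pE5_8, pE5_9, pE6_0, pE6_1, pE6_2, pE6_3, pE6_4, pE6_5, pE6_6, pE6_7, pE6_8, pE6_9, pE7_0, pE7_1, pE7_2, pE7_3, pE7_4, pE7_5, pE7_6, pE7_7, pE7_8, pE7_9, pE8_0, pE8_1, pE8_2, pE8_3, pE8_4, pE8_5, pE8_6, pE8_7, pE8_8, pE8_9, pE9_0, pE9_1, pE9_2, pE9_3, pE9_4, pE9_5, pE9_6,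 pE9_7, pE9_8, pE9_9]; ring

lemma phia_c4 (v : Pic) : phia v 4 = (-1) * v 0 + (0) * v 1 + (0) * v 2 + (0) * v 3 + (-1) * v 4 + (0) * v 5 + (0) * v 6 + (0) * v 7 + (0) * v 8 + (0) * v 9 := by
  rw [phia_apply, sum10]; simp only [pE0_0, pE0_1, pE0_2, pE0_3, pE0_4, pE0_5, pE0_6, pE0_7, pE0_8, pE0_9, pE1_0, pE1_1, pE1_2, pE1_3, pE1_4, pE1_5, pE1_6, pE1_7, pE1_8, pE1_9, pE2_0, pE2_1, pE2_2, pE2_3, pE2_4, pE2_5, pE2_6, pE2_7, pE2_8, pE2_9, pE3_0, pE3_1, pE3_2, pE3_3, pE3_4, pE3_5, pE3_6, pE3_7, pE3_8, pE3_9, pE4_0, pE4_1, pE4_2, pE4_3, pE4_4, pE4_5, pE4_6, pE4_7, pE4_8, pE4_9, pE5_0, pE5_1, pE5_2, pE5_3, pE5_4, pE5_5, pE5_6, pE5_7, pE5_8, pE5_9, pE6_0, pE6_1, pE6_2, pE6_3, pE6_4, pE6_5, pE6_6, pE6_7, pE6_8, pE6_9, pE7_0, pE7_1, pE7_2, pE7_3,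 pE7_4, pE7_5, pE7_6, pE7_7, pE7_8, pE7_9, pE8_0, pE8_1, pE8_2, pE8_3, pE8_4, pE8_5, pE8_6, pE8_7, pE8_8, pE8_9, pE9_0, pE9_1, pE9_2, pE9_3, pE9_4, pE9_5, pE9_6, pE9_7, pE9_8, pE9_9]; ring

lemma phia_c5 (v : Pic) : phia v 5 = (-1) * v 0 + (0) * v 1 + (0) * v 2 + (0) * v 3 + (0) * v 4 + (-1) * v 5 + (0) * v 6 + (0) * v 7 + (0) * v 8 + (0) * v 9 := by
  rw [phia_apply, sum10]; simp only [pE0_0, pE0_1, pE0_2, pE0_3, pE0_4, pE0_5, pE0_6, pE0_7, pE0_8, pE0_9, pE1_0, pE1_1, pE1_2, pE1_3, pE1_4, pE1_5, pE1_6, pE1_7, pE1_8, pE1_9, pE2_0, pE2_1, pE2_2, pE2_3, pE2_4, pE2_5, pE2_6, pE2_7, pE2_8, pE2_9, pE3_0, pE3_1, pE3_2, pE3_3, pE3_4, pE3_5, pE3_6, pE3_7, pE3_8, pE3_9, pE4_0, pE4_1, pE4_2, pE4_3, pE4_4, pE4_5, pE4_6, pE4_7, pE4_8, pE4_9, pE5_0,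 pE5_1, pE5_2, pE5_3, pE5_4, pE5_5, pE5_6, pE5_7, pE5_8, pE5_9, pE6_0, pE6_1, pE6_2, pE6_3, pE6_4, pE6_5, pE6_6, pE6_7, pE6_8, pE6_9, pE7_0, pE7_1, pE7_2, pE7_3, pE7_4, pE7_5, pE7_6, pE7_7, pE7_8, pE7_9, pE8_0, pE8_1, pE8_2, pE8_3, pE8_4, pE8_5, pE8_6, pE8_7, pE8_8, pE8_9, pE9_0, pE9_1, pE9_2, pE9_3, pE9_4, pE9_5, pE9_6, pE9_7, pE9_8, pE9_9]; ring

lemma phia_c6 (v : Pic) : phia v 6 = (-2) * v 0 + (-1) * v 1 + (-1) * v 2 + (-1) * v 3 + (-1) * v 4 + (-1) * v 5 + (-1) * v 6 + (0) * v 7 + (0) * v 8 + (0) * v 9 := by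
  rw [phia_apply, sum10]; simp only [pE0_0, pE0_1, pE0_2, pE0_3, pE0_4, pE0_5, pE0_6, pE0_7, pE0_8, pE0_9, pE1_0, pE1_1, pE1_2, pE1_3, pE1_4, pE1_5, pE1_6, pE1_7, pE1_8, pE1_9, pE2_0, pE2_1, pE2_2, pE2_3, pE2_4, pE2_5, pE2_6, pE2_7, pE2_8, pE2_9, pE3_0, pE3_1, pE3_2, pE3_3, pE3_4, pE3_5, pE3_6, pE3_7, pE3_8, pE3_9, pE4_0, pE4_1, pE4_2, pE4_3, pE4_4, pE4_5, pE4_6, pE4_7, pE4_8, pE4_9, pE5_0, pE5_1, pE5_2, pE5_3, pE5_4, pE5_5, pE5_6, pE5_7, pE5_8, pE5_9, pE6_0, pE6_1, pE6_2, pE6_3, pE6_4, pE6_5, pE6_6, pE6_7, pE6_8, pE6_9, pE7_0, pE7_1, pE7_2, pE7_3, pE7_4, pE7_5, pE7_6, pE7_7, pE7_8, pE7_9, pE8_0, pE8_1, pE8_2, pE8_3, pE8_4, pE8_5, pE8_6, pE8_7, pE8_8, pE8_9, pE9_0, pE9_1, pE9_2, pE9_3, pE9_4, pE9_5, pE9_6,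 pE9_7, pE9_8, pE9_9]; ring

lemma phia_c7 (v : Pic) : phia v 7 = (-2) * v 0 + (-1) * v 1 + (-1) * v 2 + (-1) * v 3 + (-1) * v 4 + (-1) * v 5 + (0) * v 6 + (-1) * v 7 + (0) * v 8 + (0) * v 9 := by
  rw [phia_apply, sum10]; simp only [pE0_0, pE0_1, pE0_2, pE0_3, pE0_4, pE0_5, pE0_6, pE0_7, pE0_8, pE0_9, pE1_0, pE1_1, pE1_2, pE1_3, pE1_4, pE1_5, pE1_6, pE1_7, pE1_8, pE1_9, pE2_0, pE2_1, pE2_2, pE2_3, pE2_4, pE2_5, pE2_6, pE2_7, pE2_8, pE2_9, pE3_0, pE3_1, pE3_2, pE3_3, pE3_4, pE3_5, pE3_6, pE3_7, pE3_8, pE3_9, pE4_0, pE4_1, pE4_2, pE4_3, pE4_4, pE4_5, pE4_6, pE4_7, pE4_8, pE4_9, pE5_0, pE5_1, pE5_2, pE5_3, pE5_4, pE5_5, pE5_6, pE5_7, pE5_8, pE5_9, pE6_0, pE6_1, pE6_2, pE6_3, pE6_4, pE6_5, pE6_6, pE6_7, pE6_8, pE6_9, pE7_0, pE7_1, pE7_2,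 pE7_3, pE7_4, pE7_5, pE7_6, pE7_7, pE7_8, pE7_9, pE8_0, pE8_1, pE8_2, pE8_3, pE8_4, pE8_5, pE8_6, pE8_7, pE8_8, pE8_9, pE9_0, pE9_1, pE9_2, pE9_3, pE9_4, pE9_5, pE9_6, pE9_7, pE9_8, pE9_9]; ring

lemma phia_c8 (v : Pic) : phia v 8 = (-2) * v 0 + (-1) * v 1 + (-1) * v 2 + (-1) * v 3 + (-1) * v 4 + (-1) * v 5 + (0) * v 6 + (0) * v 7 + (-1) * v 8 + (0) * v 9 := by
  rw [phia_apply, sum10]; simp only [pE0_0, pE0_1, pE0_2, pE0_3, pE0_4, pE0_5, pE0_6, pE0_7, pE0_8, pE0_9, pE1_0, pE1_1, pE1_2, pE1_3, pE1_4, pE1_5, pE1_6, pE1_7, pE1_8, pE1_9, pE2_0, pE2_1, pE2_2, pE2_3, pE2_4, pE2_5, pE2_6, pE2_7, pE2_8, pE2_9, pE3_0, pE3_1, pE3_2, pE3_3, pE3_4, pE3_5, pE3_6, pE3_7, pE3_8, pE3_9, pE4_0, pE4_1, pE4_2, pE4_3, pE4_4, pE4_5, pE4_6, pE4_7, pE4_8,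 pE4_9, pE5_0, pE5_1, pE5_2, pE5_3, pE5_4, pE5_5, pE5_6, pE5_7, pE5_8, pE5_9, pE6_0, pE6_1, pE6_2, pE6_3, pE6_4, pE6_5, pE6_6, pE6_7, pE6_8, pE6_9, pE7_0, pE7_1, pE7_2, pE7_3, pE7_4, pE7_5, pE7_6, pE7_7, pE7_8, pE7_9, pE8_0, pE8_1, pE8_2, pE8_3, pE8_4, pE8_5, pE8_6, pE8_7, pE8_8, pE8_9, pE9_0, pE9_1, pE9_2, pE9_3, pE9_4, pE9_5, pE9_6, pE9_7, pE9_8, pE9_9]; ring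

lemma phia_c9 (v : Pic) : phia v 9 = (-2) * v 0 + (-1) * v 1 + (-1) * v 2 + (-1) * v 3 + (-1) * v 4 + (-1) * v 5 + (0) * v 6 + (0) * v 7 + (0) * v 8 + (-1) * v 9 := by
  rw [phia_apply, sum10]; simp only [pE0_0, pE0_1, pE0_2, pE0_3, pE0_4, pE0_5, pE0_6, pE0_7, pE0_8, pE0_9, pE1_0, pE1_1, pE1_2, pE1_3, pE1_4, pE1_5, pE1_6, pE1_7, pE1_8, pE1_9, pE2_0, pE2_1, pE2_2, pE2_3, pE2_4, pE2_5, pE2_6, pE2_7, pE2_8, pE2_9, pE3_0, pE3_1, pE3_2, pE3_3, pE3_4, pE3_5, pE3_6, pE3_7, pE3_8, pE3_9, pE4_0, pE4_1, pE4_2, pE4_3, pE4_4, pE4_5, pE4_6, pE4_7, pE4_8, pE4_9, pE5_0, pE5_1, pE5_2, pE5_3, pE5_4, pE5_5, pE5_6, pE5_7, pE5_8, pE5_9, pE6_0, pE6_1, pE6_2, pE6_3, pE6_4, pE6_5, pE6_6, pE6_7, pE6_8, pE6_9, pE7_0, pE7_1, pE7_2, pE7_3, pE7_4, pE7_5, pE7_6,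 pE7_7, pE7_8, pE7_9, pE8_0, pE8_1, pE8_2, pE8_3, pE8_4, pE8_5, pE8_6, pE8_7, pE8_8, pE8_9, pE9_0, pE9_1, pE9_2, pE9_3, pE9_4, pE9_5, pE9_6, pE9_7, pE9_8, pE9_9]; ring

lemma dE0 : delta 0 = (2) := rfl
lemma dE1 : delta 1 = (2) := rfl
lemma dE2 : delta 2 = (-1) := rfl
lemma dE3 : delta 3 = (-1) := rfl
lemma dE4 : delta 4 = (-1) := rfl
lemma dE5 : delta 5 = (-1) := rfl
lemma dE6 : delta 6 = (-1) := rfl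
lemma dE7 : delta 7 = (-1) := rfl
lemma dE8 : delta 8 = (-1) := rfl
lemma dE9 : delta 9 = (-1) := rfl

/-- `φ_a` preserves the intersection form and fixes the anticanonical class. -/
theorem statement_3 :
    (∀ v w : Pic, form (phia v) (phia w) = form v w) ∧ phia delta = delta := by
  constructor
  · intro v w
    simp only [form, phia_c0, phia_c1, phia_c2, phia_c3, phia_c4, phia_c5,
      phia_c6, phia_c7, phia_c8, phia_c9]
    ring
  · funext j
    fin_cases j <;>
      simp [phia_c0, phia_c1, phia_c2, phia_c3, phia_c4, phia_c5,
        phia_c6, phia_c7, phia_c8, phia_c9, dE0, dE1, dE2, dE3, dE4, dE5,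
        dE6, dE7, dE8, dE9]
end

section
/- The action of φ_a on the simple roots is given by: φ_a(α_0) = −α_0, φ_a(α_1) = α_1 + δ, φ_a(α_2) = α_0 + α_2 + 2α_3 + α_4 − δ, φ_a(α_3) = −α_3, φ_a(α_4) = −α_4, φ_a(α_5) = −α_0 − α_1 − 2α_2 − 2α_3 − α_4 − α_5 + δ, φ_a(α_6) = −α_6, φ_a(α_7) = −α_7, and φ_a(α_8) = −α_8. -/
open Finset Function

/-- The action of `φ_a` on the simple roots. -/
theorem statement_5 :
    phia (α 0) = -α 0 ∧
    phia (α 1) = α 1 + delta ∧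
    phia (α 2) = α 0 + α 2 + 2 • α 3 + α 4 - delta ∧
    phia (α 3) = -α 3 ∧
    phia (α 4) = -α 4 ∧
    phia (α 5) = -α 0 - α 1 - 2 • α 2 - 2 • α 3 - α 4 - α 5 + delta ∧
    phia (α 6) = -α 6 ∧
    phia (α 7) = -α 7 ∧
    phia (α 8) = -α 8 := by
  refine ⟨?_, ?_, ?_, ?_, ?_, ?_, ?_, ?_, ?_⟩ <;> decide
end

section
/- The square φ_a ∘ φ_a acts on the simple roots as a translation: it fixes α_0, α_3, α_4, α_6, α_7, α_8, and sends α_1 ↦ α_1 + 2δ, α_2 ↦ α_2 − 2δ, α_5 ↦ α_5 + δ. On the other hand, φ_a itself is not a translation on the root lattice: there is no integer k with φ_a(α_0) = α_0 + kδ. -/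
open Finset Function

/-!
`φ_a` is `ℤ`-linear and fixes `δ`. Since `φ_a(e_i) = φ_a(H_g) - e_i` for `i ≤ 4` and
`φ_a(e_i) = H_f - e_i` for `i ≥ 5`, it negates `α_0, α_3, α_4, α_6, α_7, α_8`. The remaining
simple roots move by multiples of `δ` along orbits of length two:
`α_1 ↦ α_1 + δ`, `α_2 ↦ α₂' - δ ↦ α_2 - 2δ` and `α_5 ↦ δ - α₅' ↦ α_5 + δ`, so `φ_a ∘ φ_a` is a
translation. But `φ_a(α_0) = -α_0`, and `-2α_0` is not a multiple of `δ`: its `H_f`-coefficient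
forces the multiple to vanish.
-/

theorem phia_eq_linearCombination : phia = Fintype.linearCombination ℤ phiaImg := rfl

theorem phia_add (v w : Pic) : phia (v + w) = phia v + phia w := by
  rw [phia_eq_linearCombination, map_add]

theorem phia_neg (v : Pic) : phia (-v) = -phia v := by
  rw [phia_eq_linearCombination, map_neg]

theorem phia_sub (v w : Pic) : phia (v - w) = phia v - phia w := by
  rw [phia_eq_linearCombination, map_sub]

theorem phia_delta : phia delta = delta := by decide

theorem phia_phia_of_eq_neg {v : Pic} (h : phia v = -v) : phia (phia v) = v := by
  rw [h, phia_neg, h, neg_neg]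

theorem phia_α_eq_neg : ∀ i ∈ ({0, 3, 4, 6, 7, 8} : Finset (Fin 9)), phia (α i) = -α i := by
  decide

theorem phia_α_one : phia (α 1) = α 1 + delta := by decide

/-- `α₂' = H_g - e_3 - e_4`. -/
def α₂' : Pic := ![0, 1, 0, 0, -1, -1, 0, 0, 0, 0]

/-- `α₅' = H_f + H_g - e_1 - e_2 - e_3 - e_5`. -/
def α₅' : Pic := ![1, 1, -1, -1, -1, 0, -1, 0, 0, 0]

theorem phia_α_two : phia (α 2) = α₂' - delta := by decide

theorem phia_α₂' : phia α₂' = α 2 - delta := by decide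

theorem phia_α_five : phia (α 5) = delta - α₅' := by decide

theorem phia_α₅' : phia α₅' = -α 5 := by decide

theorem phia_phia_α_one : phia (phia (α 1)) = α 1 + 2 • delta := by
  rw [phia_α_one, phia_add, phia_α_one, phia_delta, add_assoc, two_smul]

theorem phia_phia_α_two : phia (phia (α 2)) = α 2 - 2 • delta := by
  rw [phia_α_two, phia_sub, phia_α₂', phia_delta, sub_sub, two_smul]

theorem phia_phia_α_five : phia (phia (α 5)) = α 5 + delta := by
  rw [phia_α_five, phia_sub, phia_delta, phia_α₅', sub_neg_eq_add, add_comm]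

theorem neg_α_zero_ne_add_smul_delta (k : ℤ) : -α 0 ≠ α 0 + k • delta := by
  intro h
  have hHf := congrFun h 0
  have he₁ := congrFun h 2
  simp [α, delta] at hHf he₁
  omega

/-- `φ_a ∘ φ_a` acts on the simple roots as a translation, while `φ_a` itself
is not a translation on the root lattice. -/
theorem statement_6 :
    ((phia ∘ phia) (α 0) = α 0 ∧
     (phia ∘ phia) (α 1) = α 1 + 2 • delta ∧
     (phia ∘ phia) (α 2) = α 2 - 2 • delta ∧
     (phia ∘ phia) (α 3) = α 3 ∧
     (phia ∘ phia) (α 4) = α 4 ∧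
     (phia ∘ phia) (α 5) = α 5 + delta ∧
     (phia ∘ phia) (α 6) = α 6 ∧
     (phia ∘ phia) (α 7) = α 7 ∧
     (phia ∘ phia) (α 8) = α 8) ∧
    ¬ ∃ k : ℤ, phia (α 0) = α 0 + k • delta := by
  have hneg : ∀ i ∈ ({0, 3, 4, 6, 7, 8} : Finset (Fin 9)), phia (phia (α i)) = α i :=
    fun i hi => phia_phia_of_eq_neg (phia_α_eq_neg i hi)
  refine ⟨⟨hneg 0 (by decide), phia_phia_α_one, phia_phia_α_two, hneg 3 (by decide),
    hneg 4 (by decide), phia_phia_α_five, hneg 6 (by decide), hneg 7 (by decide),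
    hneg 8 (by decide)⟩, ?_⟩
  rintro ⟨k, hk⟩
  exact neg_α_zero_ne_add_smul_delta k ((phia_α_eq_neg 0 (by decide)).symm.trans hk)
end
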